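/- arXiv:0803.1610 — 2 statements merged into one kernel-verified Lean document; each statement's English description precedes it below -/
import Mathlib

section
/- Let E_1, ..., E_n be i.i.d. exponential random variables with parameter 1. Then the sum T_n = E_1/1 + E_2/2 + ... + E_n/n has the same distribution as max(E_1, ..., E_n). -/
/-!
Both laws have distribution function `F_n(t) = (1 - e^{-t})^n` for `t ≥ 0` (and `0` for `t < 0`);
for the maximum this is independence. For the sum, induct on `n`: `T_{n+1} = T_n + E_{n+1}/(n+1)`
with independent summands, so `F_{n+1}(t) = ∫_0^{(n+1)t} e^{-x} F_n(t - x/(n+1)) dx`, and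
`-e^{-x} (1 - e^{x/(n+1) - t})^{n+1}` is an antiderivative of the integrand.
-/

open MeasureTheory ProbabilityTheory Real Set

noncomputable def expMaxCDF (n : ℕ) (t : ℝ) : ENNReal :=
  if 0 ≤ t then ENNReal.ofReal (1 - exp (-t)) ^ n else 0

lemma expMaxCDF_of_neg {n : ℕ} {t : ℝ} (ht : t < 0) : expMaxCDF n t = 0 := if_neg ht.not_ge

@[fun_prop]
lemma measurable_expMaxCDF (n : ℕ) : Measurable (expMaxCDF n) :=
  Measurable.ite measurableSet_Ici (by fun_prop) measurable_const

lemma expMaxCDF_one_pow {n : ℕ} (hn : n ≠ 0) (t : ℝ) : expMaxCDF 1 t ^ n = expMaxCDF n t := by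
  unfold expMaxCDF
  split_ifs <;> simp [hn]

lemma expMeasure_one_Iic (t : ℝ) : expMeasure 1 (Iic t) = expMaxCDF 1 t := by
  rw [expMeasure, gammaMeasure, withDensity_apply _ measurableSet_Iic]
  change ∫⁻ x in Iic t, exponentialPDF 1 x = _
  rw [lintegral_exponentialPDF_eq_antiDeriv one_pos, expMaxCDF, pow_one, one_mul]
  split_ifs <;> simp

lemma lintegral_expMeasure (r : ℝ) {f : ℝ → ENNReal} (hf : Measurable f) :
    ∫⁻ x, f x ∂expMeasure r = ∫⁻ x, exponentialPDF r x * f x :=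
  lintegral_withDensity_eq_lintegral_mul _ (measurable_gammaPDFReal 1 r).ennreal_ofReal hf

lemma hasDerivAt_neg_exp_neg_mul_one_sub_exp_pow (n : ℕ) (t x : ℝ) :
    HasDerivAt (fun x => -(exp (-x) * (1 - exp (x / (n + 1) - t)) ^ (n + 1)))
      (exp (-x) * (1 - exp (x / (n + 1) - t)) ^ n) x := by
  have hinner : HasDerivAt (fun x : ℝ => 1 - exp (x / (n + 1) - t))
      (-(exp (x / (n + 1) - t) * (1 / (n + 1)))) x := by
    simpa using (((hasDerivAt_id x).div_const ((n : ℝ) + 1)).sub_const t).exp.const_sub 1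
  refine (((hasDerivAt_id x).neg.exp).mul (hinner.pow (n + 1))).neg.congr_deriv ?_
  simp only [Pi.pow_apply, Pi.neg_apply, id, Nat.cast_add, Nat.cast_one, add_tsub_cancel_right]
  field_simp
  ring

lemma integral_exp_neg_mul_one_sub_exp_pow (n : ℕ) (t : ℝ) :
    ∫ x in (0 : ℝ)..(n + 1) * t, exp (-x) * (1 - exp (x / (n + 1) - t)) ^ n
      = (1 - exp (-t)) ^ (n + 1) := by
  rw [intervalIntegral.integral_eq_sub_of_hasDerivAt
    (fun x _ => hasDerivAt_neg_exp_neg_mul_one_sub_exp_pow n t x)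
    (Continuous.intervalIntegrable (by fun_prop) _ _), mul_div_cancel_left₀ t (by positivity)]
  simp

lemma exponentialPDF_mul_expMaxCDF (n : ℕ) (t x : ℝ) :
    exponentialPDF 1 x * expMaxCDF n (t - x / (n + 1)) =
      (Icc 0 ((n + 1) * t)).indicator
        (fun x => ENNReal.ofReal (exp (-x) * (1 - exp (x / (n + 1) - t)) ^ n)) x := by
  have hn : (0 : ℝ) < n + 1 := by positivity
  rcases lt_or_ge x 0 with hx | hx
  · rw [exponentialPDF_of_neg hx, zero_mul, indicator_of_notMem fun h => hx.not_ge h.1]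
  by_cases hxt : x ≤ (n + 1) * t
  · have hs : 0 ≤ t - x / (n + 1) := by rwa [sub_nonneg, div_le_iff₀' hn]
    rw [indicator_of_mem (show x ∈ Icc 0 ((n + 1) * t) from ⟨hx, hxt⟩),
      exponentialPDF_of_nonneg hx, expMaxCDF, if_pos hs, neg_sub,
      ← ENNReal.ofReal_pow (sub_nonneg.2 (exp_le_one_iff.2 (by linarith))),
      ← ENNReal.ofReal_mul (by positivity), one_mul, one_mul]
  · rw [indicator_of_notMem fun h => hxt h.2, expMaxCDF_of_neg, mul_zero]
    rw [sub_neg, lt_div_iff₀' hn]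
    exact lt_of_not_ge hxt

lemma lintegral_exponentialPDF_mul_expMaxCDF (n : ℕ) (t : ℝ) :
    ∫⁻ x, exponentialPDF 1 x * expMaxCDF n (t - x / (n + 1)) = expMaxCDF (n + 1) t := by
  simp_rw [exponentialPDF_mul_expMaxCDF, lintegral_indicator measurableSet_Icc]
  rcases lt_or_ge t 0 with ht | ht
  · rw [Icc_eq_empty (by nlinarith), Measure.restrict_empty, lintegral_zero_measure,
      expMaxCDF_of_neg ht]
  have hb : 0 ≤ ((n : ℝ) + 1) * t := by positivity
  rw [← ofReal_integral_eq_lintegral_ofReal, integral_Icc_eq_integral_Ioc,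
    ← intervalIntegral.integral_of_le hb, integral_exp_neg_mul_one_sub_exp_pow, expMaxCDF,
    if_pos ht, ENNReal.ofReal_pow (by linarith [exp_le_one_iff.2 (neg_nonpos.2 ht)])]
  · exact (by fun_prop : Continuous _).integrableOn_Icc
  · refine ae_restrict_of_forall_mem measurableSet_Icc fun x hx => ?_
    have : x / (n + 1) - t ≤ 0 := by
      rw [sub_nonpos, div_le_iff₀' (by positivity)]
      exact hx.2
    exact mul_nonneg (exp_pos _).le (pow_nonneg (sub_nonneg.2 (exp_le_one_iff.2 this)) n)

lemma conv_apply_Iic {μ ν : Measure ℝ} [SFinite μ] [SFinite ν] (t : ℝ) :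
    (μ ∗ ν) (Iic t) = ∫⁻ y, μ (Iic (t - y)) ∂ν := by
  rw [Measure.conv, Measure.map_apply measurable_add measurableSet_Iic,
    Measure.prod_apply_symm (measurable_add measurableSet_Iic)]
  congr! with y
  ext x
  simp [le_sub_iff_add_le]

lemma map_sum_div_succ_apply_Iic {Ω : Type*} [MeasurableSpace Ω] {P : Measure Ω}
    [IsProbabilityMeasure P] {E : ℕ → Ω → ℝ} (hmeas : ∀ k, Measurable (E k))
    (hindep : iIndepFun E P) (hdist : ∀ k, P.map (E k) = expMeasure 1) (m : ℕ) (t : ℝ) :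
    P.map (fun ω => ∑ k ∈ Finset.range m, E k ω / (k + 1)) (Iic t) = expMaxCDF m t := by
  set g : ℕ → Ω → ℝ := fun k ω => E k ω / (k + 1)
  have hg : ∀ k, Measurable (g k) := fun k => (hmeas k).div_const _
  have hsum : ∀ m, (fun ω => ∑ k ∈ Finset.range m, E k ω / (k + 1)) = ∑ k ∈ Finset.range m, g k :=
    fun m => by ext ω; simp [g, Finset.sum_apply]
  induction m generalizing t with
  | zero =>
    simp [Measure.map_const, expMaxCDF, indicator_apply]
  | succ m ih =>
    have hindep' : IndepFun (∑ k ∈ Finset.range m, g k) (g m) P :=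
      (hindep.comp _ fun k => measurable_id.div_const ((k : ℝ) + 1)).indepFun_sum_range_succ hg m
    have hlaw : P.map (g m) = (expMeasure 1).map (· / ((m : ℝ) + 1)) := by
      rw [← hdist m, Measure.map_map (by fun_prop) (hmeas m)]
      rfl
    rw [hsum, Finset.sum_range_succ, hindep'.map_add_eq_map_conv_map (by fun_prop) (hg m),
      conv_apply_Iic, ← hsum]
    simp_rw [ih]
    rw [hlaw, lintegral_map (by fun_prop) (by fun_prop), lintegral_expMeasure 1 (by fun_prop),
      lintegral_exponentialPDF_mul_expMaxCDF]

lemma ProbabilityTheory.iIndepFun.map_sup'_apply_Iic {Ω ι : Type*} [MeasurableSpace Ω]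
    {P : Measure Ω} {E : ι → Ω → ℝ} (hmeas : ∀ k, Measurable (E k)) (hindep : iIndepFun E P)
    {s : Finset ι} (hs : s.Nonempty) (t : ℝ) :
    P.map (fun ω => s.sup' hs fun k => E k ω) (Iic t) = ∏ k ∈ s, P.map (E k) (Iic t) := by
  have hmax : Measurable fun ω => s.sup' hs fun k => E k ω := by
    simpa only [← Finset.sup'_apply] using Finset.measurable_sup' hs fun k _ => hmeas k
  have hset : (fun ω => s.sup' hs fun k => E k ω) ⁻¹' Iic t = ⋂ k ∈ s, E k ⁻¹' Iic t := by
    ext ω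
    simp [Finset.sup'_le_iff]
  rw [Measure.map_apply hmax measurableSet_Iic, hset,
    hindep.meas_biInter fun k _ => ⟨Iic t, measurableSet_Iic, rfl⟩]
  simp_rw [Measure.map_apply (hmeas _) measurableSet_Iic]

/-- If `E 0, ..., E (n-1)` are i.i.d. exponential random variables with rate 1, then
`T_n = ∑_{k=1}^n E_k / k` has the same distribution as `max(E_1, ..., E_n)`. -/
theorem stmt0 {Ω : Type*} [MeasurableSpace Ω] (P : Measure Ω) [IsProbabilityMeasure P]
    (E : ℕ → Ω → ℝ) (hmeas : ∀ k, Measurable (E k))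
    (hindep : iIndepFun E P)
    (hdist : ∀ k, Measure.map (E k) P = expMeasure 1)
    (n : ℕ) (hn : 1 ≤ n) :
    Measure.map (fun ω => ∑ k ∈ Finset.range n, E k ω / (k + 1)) P =
      Measure.map
        (fun ω => (Finset.range n).sup' (Finset.nonempty_range_iff.2 (by omega))
          (fun k => E k ω)) P := by
  have := Measure.isProbabilityMeasure_map (μ := P)
    (by fun_prop : Measurable fun ω => ∑ k ∈ Finset.range n, E k ω / (k + 1)).aemeasurable
  refine Measure.ext_of_Iic _ _ fun t => ?_
  rw [map_sum_div_succ_apply_Iic hmeas hindep hdist, hindep.map_sup'_apply_Iic hmeas]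
  simp_rw [hdist, expMeasure_one_Iic, Finset.prod_const, Finset.card_range,
    expMaxCDF_one_pow (by omega : n ≠ 0)]
end

section
/- Let \delta > 1, \alpha > 0, and q(u) = \alpha u^{-\delta} for u \ge 1. Then for N \to \infty and k(N) \sim A (N/\log N)^{1/\delta} with A > 0, \int_1^{k(N)} e^{-N q(u)} du \sim \frac{1}{\alpha\delta} \frac{k(N)^{1+\delta}}{N} exp(-\alpha N k(N)^{-\delta}). -/
open Filter Real Topology

/-!
Write `g(u) = exp (-a u^{-δ})` with `a = Nα`. The function `F(u) = u^{1+δ}/(aδ) · exp (-a u^{-δ})`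
satisfies `F' = g · (1 + (1+δ)/(aδ) · u^δ)`. The bracket is at least `1` and increasing, so on
`[1, b]` integration gives `∫ g ≤ F b` and `F b - F 1 ≤ (∫ g) · (1 + (1+δ)/(aδ) · b^δ)`. Once
`b^{-δ} ≤ 1/2` the boundary term `F 1` is at most `e^{-a/2} F b`, and for `b = k(N)` the correction
`(1+δ)/(Nαδ) · k(N)^δ` is of order `1 / log N`; hence `(∫ g) / F b → 1`.
-/

noncomputable def expNegRpowMajorant (a δ u : ℝ) : ℝ :=
  u ^ (1 + δ) / (a * δ) * exp (-a * u ^ (-δ))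

section

variable {a δ : ℝ}

theorem hasDerivAt_expNegRpowMajorant (ha : a ≠ 0) (hδ : δ ≠ 0) {u : ℝ} (hu : 0 < u) :
    HasDerivAt (expNegRpowMajorant a δ)
      (exp (-a * u ^ (-δ)) * (1 + (1 + δ) / (a * δ) * u ^ δ)) u := by
  have hpow := hasDerivAt_rpow_const (p := 1 + δ) (Or.inl hu.ne')
  have hexp := ((hasDerivAt_rpow_const (p := -δ) (Or.inl hu.ne')).const_mul (-a)).exp
  refine ((hpow.div_const (a * δ)).mul hexp).congr_deriv ?_
  have hcancel : u ^ (1 + δ) * u ^ (-δ - 1) = 1 := by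
    rw [← rpow_add hu, show 1 + δ + (-δ - 1) = 0 by ring, rpow_zero]
  rw [show 1 + δ - 1 = δ by ring]
  field_simp
  linear_combination a * δ * hcancel

theorem continuousOn_expNegRpow_mul {c : ℝ} {s : Set ℝ} (hs : ∀ x ∈ s, x ≠ 0) :
    ContinuousOn (fun u ↦ exp (-a * u ^ (-δ)) * (1 + c * u ^ δ)) s := by
  have hrpow (p : ℝ) : ContinuousOn (fun u : ℝ ↦ u ^ p) s :=
    continuousOn_id.rpow_const fun x hx ↦ Or.inl (hs x hx)
  exact (continuous_exp.comp_continuousOn ((hrpow _).const_smul (-a))).mul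
    (continuousOn_const.add ((hrpow δ).const_smul c))

theorem integral_expNegRpow_mul_eq_sub (ha : a ≠ 0) (hδ : δ ≠ 0) {x y : ℝ} (hx : 0 < x)
    (hy : 0 < y) :
    ∫ u in x..y, exp (-a * u ^ (-δ)) * (1 + (1 + δ) / (a * δ) * u ^ δ) =
      expNegRpowMajorant a δ y - expNegRpowMajorant a δ x := by
  have hpos : ∀ u ∈ Set.uIcc x y, 0 < u := fun u hu ↦
    lt_of_lt_of_le (lt_min hx hy) hu.1
  refine intervalIntegral.integral_eq_sub_of_hasDerivAt
    (fun u hu ↦ hasDerivAt_expNegRpowMajorant ha hδ (hpos u hu)) ?_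
  exact (continuousOn_expNegRpow_mul fun u hu ↦ (hpos u hu).ne').intervalIntegrable

theorem expNegRpowMajorant_pos (ha : 0 < a) (hδ : 0 < δ) {u : ℝ} (hu : 0 < u) :
    0 < expNegRpowMajorant a δ u := by
  unfold expNegRpowMajorant
  positivity

theorem intervalIntegrable_expNegRpow_mul (c : ℝ) {b : ℝ} (hb : 0 < b) :
    IntervalIntegrable (fun u ↦ exp (-a * u ^ (-δ)) * (1 + c * u ^ δ)) MeasureTheory.volume 1 b :=
  (continuousOn_expNegRpow_mul fun _ hu ↦
    (lt_min one_pos hb |>.trans_le hu.1).ne').intervalIntegrable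

theorem intervalIntegrable_expNegRpow {b : ℝ} (hb : 0 < b) :
    IntervalIntegrable (fun u ↦ exp (-a * u ^ (-δ))) MeasureTheory.volume 1 b := by
  simpa using intervalIntegrable_expNegRpow_mul (a := a) (δ := δ) 0 hb

theorem integral_expNegRpow_le_expNegRpowMajorant (ha : 0 < a) (hδ : 0 < δ) {b : ℝ} (hb : 1 ≤ b) :
    ∫ u in (1 : ℝ)..b, exp (-a * u ^ (-δ)) ≤ expNegRpowMajorant a δ b := by
  have hb0 : 0 < b := one_pos.trans_le hb
  calc ∫ u in (1 : ℝ)..b, exp (-a * u ^ (-δ))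
      ≤ ∫ u in (1 : ℝ)..b, exp (-a * u ^ (-δ)) * (1 + (1 + δ) / (a * δ) * u ^ δ) := by
        refine intervalIntegral.integral_mono_on hb (intervalIntegrable_expNegRpow hb0)
          (intervalIntegrable_expNegRpow_mul _ hb0) fun u hu ↦ ?_
        have : 0 ≤ (1 + δ) / (a * δ) * u ^ δ := by
          have := zero_lt_one.trans_le hu.1
          positivity
        nlinarith [exp_pos (-a * u ^ (-δ))]
    _ = expNegRpowMajorant a δ b - expNegRpowMajorant a δ 1 :=
        integral_expNegRpow_mul_eq_sub ha.ne' hδ.ne' one_pos hb0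
    _ ≤ expNegRpowMajorant a δ b := sub_le_self _ (expNegRpowMajorant_pos ha hδ one_pos).le

theorem expNegRpowMajorant_sub_le_integral_expNegRpow_mul (ha : 0 < a) (hδ : 0 < δ) {b : ℝ}
    (hb : 1 ≤ b) :
    expNegRpowMajorant a δ b - expNegRpowMajorant a δ 1 ≤
      (∫ u in (1 : ℝ)..b, exp (-a * u ^ (-δ))) * (1 + (1 + δ) / (a * δ) * b ^ δ) := by
  have hb0 : 0 < b := one_pos.trans_le hb
  rw [← integral_expNegRpow_mul_eq_sub ha.ne' hδ.ne' one_pos hb0,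
    ← intervalIntegral.integral_mul_const]
  refine intervalIntegral.integral_mono_on hb (intervalIntegrable_expNegRpow_mul _ hb0)
    ((intervalIntegrable_expNegRpow hb0).mul_const _) fun u hu ↦ ?_
  have hu0 : 0 < u := zero_lt_one.trans_le hu.1
  have : u ^ δ ≤ b ^ δ := rpow_le_rpow hu0.le hu.2 hδ.le
  gcongr

theorem expNegRpowMajorant_one_le (ha : 0 < a) (hδ : 0 < δ) {b : ℝ} (hb : 1 ≤ b)
    (hb' : b ^ (-δ) ≤ 1 / 2) :
    expNegRpowMajorant a δ 1 ≤ exp (-a / 2) * expNegRpowMajorant a δ b := by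
  have hpow : 1 ≤ b ^ (1 + δ) := one_le_rpow hb (by linarith)
  have hexp : exp (-a / 2) ≤ exp (-a * b ^ (-δ)) := exp_le_exp.mpr (by nlinarith)
  calc expNegRpowMajorant a δ 1 = exp (-a / 2) * (1 / (a * δ) * exp (-a / 2)) := by
        rw [expNegRpowMajorant, one_rpow, one_rpow, mul_one, ← mul_left_comm, ← exp_add]
        ring_nf
    _ ≤ exp (-a / 2) * expNegRpowMajorant a δ b := by
        unfold expNegRpowMajorant
        gcongr

theorem integral_expNegRpow_div_expNegRpowMajorant_le_one (ha : 0 < a) (hδ : 0 < δ) {b : ℝ}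
    (hb : 1 ≤ b) :
    (∫ u in (1 : ℝ)..b, exp (-a * u ^ (-δ))) / expNegRpowMajorant a δ b ≤ 1 :=
  (div_le_one (expNegRpowMajorant_pos ha hδ (one_pos.trans_le hb))).mpr
    (integral_expNegRpow_le_expNegRpowMajorant ha hδ hb)

theorem one_sub_exp_div_le_integral_expNegRpow_div_expNegRpowMajorant (ha : 0 < a) (hδ : 0 < δ)
    {b : ℝ} (hb : 1 ≤ b) (hb' : b ^ (-δ) ≤ 1 / 2) :
    (1 - exp (-a / 2)) / (1 + (1 + δ) / (a * δ) * b ^ δ) ≤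
      (∫ u in (1 : ℝ)..b, exp (-a * u ^ (-δ))) / expNegRpowMajorant a δ b := by
  have hb0 : 0 < b := one_pos.trans_le hb
  rw [div_le_div_iff₀ (by positivity) (expNegRpowMajorant_pos ha hδ hb0)]
  calc (1 - exp (-a / 2)) * expNegRpowMajorant a δ b
      = expNegRpowMajorant a δ b - exp (-a / 2) * expNegRpowMajorant a δ b := by ring
    _ ≤ expNegRpowMajorant a δ b - expNegRpowMajorant a δ 1 := by
        linarith [expNegRpowMajorant_one_le ha hδ hb hb']
    _ ≤ _ := expNegRpowMajorant_sub_le_integral_expNegRpow_mul ha hδ hb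

end

theorem tendsto_div_log_atTop : Tendsto (fun x : ℝ ↦ x / log x) atTop atTop :=
  ((tendsto_exp_div_pow_atTop 1).comp tendsto_log_atTop).congr' <| by
    filter_upwards [eventually_gt_atTop 0] with x hx
    simp [exp_log hx]

section

variable {δ A : ℝ} {k : ℕ → ℝ}

theorem tendsto_atTop_of_tendsto_div_rpow_div_log (hδ : 0 < δ) (hA : 0 < A)
    (hk : Tendsto (fun N : ℕ ↦ k N / ((N / log N) ^ (1 / δ))) atTop (𝓝 A)) :
    Tendsto k atTop atTop := by
  have ht : Tendsto (fun N : ℕ ↦ ((N : ℝ) / log N) ^ (1 / δ)) atTop atTop :=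
    (tendsto_rpow_atTop (by positivity)).comp
      (tendsto_div_log_atTop.comp tendsto_natCast_atTop_atTop)
  exact (hk.pos_mul_atTop hA ht).congr' (ht.eventually_gt_atTop 0 |>.mono fun N hN ↦
    div_mul_cancel₀ _ hN.ne')

theorem tendsto_rpow_div_of_tendsto_div_rpow_div_log (hδ : 0 < δ) (hA : 0 < A)
    (hk : Tendsto (fun N : ℕ ↦ k N / ((N / log N) ^ (1 / δ))) atTop (𝓝 A)) :
    Tendsto (fun N : ℕ ↦ k N ^ δ / N) atTop (𝓝 0) := by
  have hlog : Tendsto (fun N : ℕ ↦ log N) atTop atTop :=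
    tendsto_log_atTop.comp tendsto_natCast_atTop_atTop
  have hmul := (hk.rpow_const (Or.inr hδ.le)).mul hlog.inv_tendsto_atTop
  rw [mul_zero] at hmul
  refine hmul.congr' ?_
  filter_upwards [hlog.eventually_gt_atTop 0, tendsto_natCast_atTop_atTop.eventually_gt_atTop 0,
    (tendsto_atTop_of_tendsto_div_rpow_div_log hδ hA hk).eventually_ge_atTop 0]
    with N hlogN hN hkN
  rw [Pi.inv_apply, div_rpow hkN (by positivity), ← rpow_mul (by positivity),
    one_div_mul_cancel hδ.ne', rpow_one]
  field_simp

end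

theorem tendsto_integral_expNegRpow_div_expNegRpowMajorant {ι : Type*} {l : Filter ι} {δ : ℝ}
    {a b : ι → ℝ} (hδ : 0 < δ) (ha : Tendsto a l atTop) (hb : Tendsto b l atTop)
    (hab : Tendsto (fun i ↦ b i ^ δ / a i) l (𝓝 0)) :
    Tendsto (fun i ↦
      (∫ u in (1 : ℝ)..b i, exp (-a i * u ^ (-δ))) / expNegRpowMajorant (a i) δ (b i)) l (𝓝 1) := by
  have hc : Tendsto (fun i ↦ (1 + δ) / (a i * δ) * b i ^ δ) l (𝓝 0) := by
    simpa using (hab.const_mul ((1 + δ) / δ)).congr fun i ↦ by ring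
  have he : Tendsto (fun i ↦ exp (-a i / 2)) l (𝓝 0) :=
    tendsto_exp_atBot.comp <| by simpa [neg_div] using ha.atTop_div_const two_pos
  have hlow : Tendsto (fun i ↦ (1 - exp (-a i / 2)) / (1 + (1 + δ) / (a i * δ) * b i ^ δ))
      l (𝓝 1) := by
    simpa [Pi.div_def] using (tendsto_const_nhds.sub he).div (tendsto_const_nhds.add hc)
      (by norm_num : (1 : ℝ) + 0 ≠ 0)
  have hb1 := hb.eventually_ge_atTop 1
  have hb2 : ∀ᶠ i in l, b i ^ (-δ) ≤ 1 / 2 :=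
    ((tendsto_rpow_neg_atTop hδ).comp hb).eventually (eventually_le_nhds (by norm_num))
  refine tendsto_of_tendsto_of_tendsto_of_le_of_le' hlow tendsto_const_nhds ?_ ?_
  · filter_upwards [ha.eventually_gt_atTop 0, hb1, hb2] with i ha hb1 hb2
    exact one_sub_exp_div_le_integral_expNegRpow_div_expNegRpowMajorant ha hδ hb1 hb2
  · filter_upwards [ha.eventually_gt_atTop 0, hb1] with i ha hb1
    exact integral_expNegRpow_div_expNegRpowMajorant_le_one ha hδ hb1

/-- For `δ > 1`, `α > 0`, `q(u) = α u^{-δ}` and `k(N) ∼ A (N / log N)^{1/δ}` with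
`A > 0`, one has
`∫_1^{k(N)} e^{-N q(u)} du ∼ (1/(αδ)) (k(N)^{1+δ}/N) exp(-α N k(N)^{-δ})` as `N → ∞`. -/
theorem stmt16 (α δ A : ℝ) (hα : 0 < α) (hδ : 1 < δ) (hA : 0 < A)
    (k : ℕ → ℝ)
    (hk : Tendsto (fun N : ℕ => k N / ((N / Real.log N) ^ (1 / δ))) atTop (nhds A)) :
    Tendsto
      (fun N : ℕ =>
        (∫ u in (1 : ℝ)..(k N), Real.exp (-(N : ℝ) * (α * u ^ (-δ)))) /
          (1 / (α * δ) * (k N ^ (1 + δ) / N) * Real.exp (-α * N * k N ^ (-δ))))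
      atTop (nhds 1) := by
  have hδ0 : 0 < δ := by linarith
  have hN : Tendsto (fun N : ℕ ↦ (N : ℝ) * α) atTop atTop :=
    tendsto_natCast_atTop_atTop.atTop_mul_const hα
  have hkN : Tendsto (fun N : ℕ ↦ k N ^ δ / (N * α)) atTop (𝓝 0) := by
    simpa using ((tendsto_rpow_div_of_tendsto_div_rpow_div_log hδ0 hA hk).div_const α).congr
      fun N ↦ by ring
  refine (tendsto_integral_expNegRpow_div_expNegRpowMajorant hδ0 hN
    (tendsto_atTop_of_tendsto_div_rpow_div_log hδ0 hA hk) hkN).congr fun N ↦ ?_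
  simp only [expNegRpowMajorant, neg_mul, mul_assoc]
  ring_nf
end
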